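/- Let k, k′ > 0 and let σ : ℝ → ℂ be measurable. Let r_j′ = (x_j′, y_j′) (1 ≤ j ≤ M_s) be source points with strengths Q_j′ ∈ ℂ, let c′ = (x_c′, y_c′) be a source center with (ρ_j′, θ_j′) the polar coordinates of r_j′ − c′, let c = (x_c, y_c) be a target center, and let r_i = (x_i, y_i) be a target point with (ρ_i, θ_i) the polar coordinates of r_i − c. Define the multipole coefficients α_n = Σ_{j=1}^{M_s} Q_j′·J_n(k′ρ_j′)·e^{inθ_j′} and the multipole-to-local (M2L) translated coefficients β_m = (−1)^m·Σ_{n∈ℤ} 𝓘^{k′k}_{nm}(x_c′ − x_c, y_c′, y_c, σ)·α_n. Assume that for all n, m ∈ ℤ the function λ ↦ 𝓔^{k′k}(x_c′ − x_c, y_c′, y_c)·ω(λ,k′)^n·ω(λ,k)^m·σ(λ) is integrable and that for each j, Σ_{n,m∈ℤ} |J_n(k′ρ_j′)|·|J_m(kρ_i)|·∫_ℝ |𝓔^{k′k}(x_c′ − x_c, y_c′, y_c)·ω(λ,k′)^n·ω(λ,k)^m·σ(λ)| dλ < ∞. Then the potential Φ⁺(r_i, σ) = Σ_{j=1}^{M_s}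 Q_j′·𝓘^{k′k}_{00}(x_j′ − x_i, y_j′, y_i, σ) equals the absolutely convergent local expansion Σ_{m∈ℤ} β_m·J_m(kρ_i)·e^{imθ_i}. -/

import Mathlib

open Complex MeasureTheory Filter

/-- The branch of the vertical wavenumber: κ(λ,k) = √(k²−λ²) if |λ| ≤ k,
and κ(λ,k) = i√(λ²−k²) if |λ| > k. -/
noncomputable def kappa (lam k : ℝ) : ℂ :=
  if |lam| ≤ k then ((Real.sqrt (k ^ 2 - lam ^ 2) : ℝ) : ℂ)
  else Complex.I * ((Real.sqrt (lam ^ 2 - k ^ 2) : ℝ) : ℂ)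

/-- ω(λ,k) = (κ(λ,k) + iλ)/k. -/
noncomputable def omega (lam k : ℝ) : ℂ := (kappa lam k + Complex.I * (lam : ℂ)) / (k : ℂ)

/-- The plane-wave kernel 𝓔^{kk′}(x, y, y′) = exp(iλx + iκ(λ,k)y − iκ(λ,k′)y′). -/
noncomputable def pwKernel (k k' lam x y y' : ℝ) : ℂ :=
  Complex.exp (Complex.I * (lam : ℂ) * (x : ℂ) + Complex.I * kappa lam k * (y : ℂ)
    - Complex.I * kappa lam k' * (y' : ℂ))

/-- Bessel function of the first kind of nonnegative integer order, via its power series. -/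
noncomputable def besselJnat (n : ℕ) (z : ℂ) : ℂ :=
  ∑' m : ℕ, ((-1 : ℂ) ^ m / ((m.factorial : ℂ) * ((m + n).factorial : ℂ))) * (z / 2) ^ (2 * m + n)

/-- Bessel function of the first kind of integer order, with J_{−n} = (−1)^n J_n. -/
noncomputable def besselJ (n : ℤ) (z : ℂ) : ℂ :=
  if 0 ≤ n then besselJnat n.toNat z else (-1 : ℂ) ^ ((-n).toNat) * besselJnat ((-n).toNat) z

/-- Integrand of the Sommerfeld-type integral 𝓘^{kk′}_{nm}. -/
noncomputable def sommerfeldIntegrand (k k' : ℝ) (n m : ℤ) (x y y' : ℝ) (σ : ℝ → ℂ)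
    (lam : ℝ) : ℂ :=
  pwKernel k k' lam x y y' * (omega lam k) ^ n * (omega lam k') ^ m * σ lam

/-- The Sommerfeld-type integral 𝓘^{kk′}_{nm}(x, y, y′, σ). -/
noncomputable def sommerfeld (k k' : ℝ) (n m : ℤ) (x y y' : ℝ) (σ : ℝ → ℂ) : ℂ :=
  ∫ lam : ℝ, sommerfeldIntegrand k k' n m x y y' σ lam

set_option maxHeartbeats 1000000

lemma besselJnat_summable (n : ℕ) (z : ℂ) :
    Summable fun m : ℕ =>
      ((-1 : ℂ) ^ m / ((m.factorial : ℂ) * ((m + n).factorial : ℂ))) * (z / 2) ^ (2 * m + n) := by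
  have hb : Summable (fun m : ℕ => ‖z / 2‖ ^ n * ((‖z / 2‖ ^ 2) ^ m / m.factorial)) :=
    (Real.summable_pow_div_factorial _).mul_left _
  apply Summable.of_norm_bounded hb
  intro m
  have h1 : (0 : ℝ) < m.factorial := by exact_mod_cast m.factorial_pos
  have h2 : (1 : ℝ) ≤ ((m + n).factorial : ℝ) := by exact_mod_cast (m + n).factorial_pos
  have hnn : (0 : ℝ) ≤ ‖z / 2‖ := norm_nonneg _
  rw [norm_mul, norm_div, norm_pow, norm_neg, norm_one, one_pow, norm_mul, norm_pow]
  simp only [Complex.norm_natCast]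
  calc 1 / ((m.factorial : ℝ) * (m + n).factorial) * ‖z / 2‖ ^ (2 * m + n)
      ≤ 1 / ((m.factorial : ℝ) * 1) * ‖z / 2‖ ^ (2 * m + n) := by gcongr
    _ = ‖z / 2‖ ^ n * ((‖z / 2‖ ^ 2) ^ m / m.factorial) := by
        rw [pow_add, pow_mul]; field_simp

lemma besselJnat_hasSum (n : ℕ) (z : ℂ) :
    HasSum (fun m : ℕ =>
      ((-1 : ℂ) ^ m / ((m.factorial : ℂ) * ((m + n).factorial : ℂ))) * (z / 2) ^ (2 * m + n))
      (besselJnat n z) := (besselJnat_summable n z).hasSum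

def pairEquiv : ℤ × ℕ ≃ ℕ × ℕ where
  toFun p := (p.2 + p.1.toNat, p.2 + (-p.1).toNat)
  invFun q := ((q.1 : ℤ) - (q.2 : ℤ), min q.1 q.2)
  left_inv p := by
    obtain ⟨a, b⟩ := p
    simp only [Prod.mk.injEq]
    omega
  right_inv q := by
    obtain ⟨a, b⟩ := q
    simp only [Prod.mk.injEq]
    omega

lemma fiber_eq (z t : ℂ) (ht : t ≠ 0) (N c : ℕ) :
    (z * t / 2) ^ (c + N) / (c + N).factorial * ((-(z / (2 * t))) ^ c / c.factorial)
      = ((-1 : ℂ) ^ c / ((c.factorial : ℂ) * ((c + N).factorial : ℂ))) * (z / 2) ^ (2 * c + N)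
          * t ^ N := by
  have hc : ((c.factorial : ℂ)) ≠ 0 := Nat.cast_ne_zero.mpr c.factorial_ne_zero
  have hcN : (((c + N).factorial : ℂ)) ≠ 0 := Nat.cast_ne_zero.mpr (c + N).factorial_ne_zero
  have e1 : (z * t / 2) ^ (c + N) = (z / 2) ^ (c + N) * (t ^ c * t ^ N) := by
    rw [show z * t / 2 = z / 2 * t by ring, mul_pow, pow_add t c N]
  have e2 : (-(z / (2 * t))) ^ c = (-1 : ℂ) ^ c * (z / 2) ^ c * (t ^ c)⁻¹ := by
    rw [← inv_pow, ← mul_pow, ← mul_pow]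
    congr 1
    field_simp
  rw [e1, e2]
  have e3 : (z / 2) ^ (c + N) * (z / 2) ^ c = (z / 2) ^ (2 * c + N) := by
    rw [← pow_add]; congr 1; ring
  have htc : (t : ℂ) ^ c ≠ 0 := pow_ne_zero _ ht
  field_simp
  ring

lemma genfun (z t : ℂ) (ht : t ≠ 0) :
    HasSum (fun n : ℤ => besselJ n z * t ^ n) (Complex.exp (z / 2 * (t - t⁻¹))) := by
  have hg : HasSum (fun a : ℕ => (z * t / 2) ^ a / a.factorial) (Complex.exp (z * t / 2)) := by
    rw [Complex.exp_eq_exp_ℂ]; exact NormedSpace.expSeries_div_hasSum_exp _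
  have hh : HasSum (fun b : ℕ => (-(z / (2 * t))) ^ b / b.factorial)
      (Complex.exp (-(z / (2 * t)))) := by
    rw [Complex.exp_eq_exp_ℂ]; exact NormedSpace.expSeries_div_hasSum_exp _
  have hn1 : Summable fun a : ℕ => ‖(z * t / 2) ^ a / a.factorial‖ :=
    summable_norm_iff.mpr hg.summable
  have hn2 : Summable fun b : ℕ => ‖(-(z / (2 * t))) ^ b / b.factorial‖ :=
    summable_norm_iff.mpr hh.summable
  have hmn := Summable.mul_norm hn1 hn2
  have hsummable : Summable (fun q : ℕ × ℕ =>
      ((z * t / 2) ^ q.1 / q.1.factorial) * ((-(z / (2 * t))) ^ q.2 / q.2.factorial)) :=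
    summable_norm_iff.mp hmn
  have hprod := hg.mul hh hsummable
  have hexp : Complex.exp (z * t / 2) * Complex.exp (-(z / (2 * t)))
      = Complex.exp (z / 2 * (t - t⁻¹)) := by
    rw [← Complex.exp_add]; congr 1; field_simp; ring
  rw [hexp] at hprod
  refine HasSum.prod_fiberwise ((pairEquiv.hasSum_iff).mpr hprod) ?_
  intro n
  rcases le_or_gt 0 n with hn | hn
  · have hneg : (-n).toNat = 0 := by omega
    have hfun : (fun c : ℕ =>
        ((z * t / 2) ^ (pairEquiv.toFun (n, c)).1 / ((pairEquiv.toFun (n, c)).1.factorial : ℂ))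
          * ((-(z / (2 * t))) ^ (pairEquiv.toFun (n, c)).2
              / ((pairEquiv.toFun (n, c)).2.factorial : ℂ)))
        = fun c : ℕ =>
          (((-1 : ℂ) ^ c / ((c.factorial : ℂ) * ((c + n.toNat).factorial : ℂ)))
            * (z / 2) ^ (2 * c + n.toNat)) * t ^ n.toNat := by
      funext c
      show (z * t / 2) ^ (c + n.toNat) / ((c + n.toNat).factorial : ℂ)
          * ((-(z / (2 * t))) ^ (c + (-n).toNat) / ((c + (-n).toNat).factorial : ℂ)) = _
      rw [hneg, Nat.add_zero]
      exact fiber_eq z t ht n.toNat c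
    have hv : besselJ n z * t ^ n = besselJnat n.toNat z * t ^ n.toNat := by
      rw [show besselJ n z = besselJnat n.toNat z from if_pos hn,
        ← zpow_natCast t n.toNat, Int.toNat_of_nonneg hn]
    show HasSum (fun c : ℕ =>
        ((z * t / 2) ^ (pairEquiv.toFun (n, c)).1 / ((pairEquiv.toFun (n, c)).1.factorial : ℂ))
          * ((-(z / (2 * t))) ^ (pairEquiv.toFun (n, c)).2
              / ((pairEquiv.toFun (n, c)).2.factorial : ℂ))) (besselJ n z * t ^ n)
    rw [hfun, hv]
    exact (besselJnat_hasSum n.toNat z).mul_right _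
  · set M := (-n).toNat with hMdef
    have h0 : n.toNat = 0 := by omega
    have hs : (-t⁻¹ : ℂ) ≠ 0 := neg_ne_zero.mpr (inv_ne_zero ht)
    have hfun : (fun c : ℕ =>
        ((z * t / 2) ^ (pairEquiv.toFun (n, c)).1 / ((pairEquiv.toFun (n, c)).1.factorial : ℂ))
          * ((-(z / (2 * t))) ^ (pairEquiv.toFun (n, c)).2
              / ((pairEquiv.toFun (n, c)).2.factorial : ℂ)))
        = fun c : ℕ =>
          ((-1 : ℂ) ^ M) * ((((-1 : ℂ) ^ c / ((c.factorial : ℂ) * ((c + M).factorial : ℂ)))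
            * (z / 2) ^ (2 * c + M)) * (t⁻¹) ^ M) := by
      funext c
      show (z * t / 2) ^ (c + n.toNat) / ((c + n.toNat).factorial : ℂ)
          * ((-(z / (2 * t))) ^ (c + M) / ((c + M).factorial : ℂ)) = _
      rw [h0, Nat.add_zero]
      have h1 : z * t / 2 = -(z / (2 * (-t⁻¹))) := by field_simp
      have h2 : -(z / (2 * t)) = z * (-t⁻¹) / 2 := by
        rw [mul_comm 2 t, ← div_div, div_eq_mul_inv z t, mul_neg, neg_div]
      rw [h1, h2, mul_comm, fiber_eq z (-t⁻¹) hs M c]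
      ring
    have hv : besselJ n z * t ^ n
        = ((-1 : ℂ) ^ M) * (besselJnat M z * (t⁻¹) ^ M) := by
      rw [show besselJ n z = (-1 : ℂ) ^ M * besselJnat M z from if_neg (not_le.mpr hn)]
      have hnM : n = -(M : ℤ) := by omega
      rw [hnM, zpow_neg, zpow_natCast, ← inv_pow]
      ring
    show HasSum (fun c : ℕ =>
        ((z * t / 2) ^ (pairEquiv.toFun (n, c)).1 / ((pairEquiv.toFun (n, c)).1.factorial : ℂ))
          * ((-(z / (2 * t))) ^ (pairEquiv.toFun (n, c)).2
              / ((pairEquiv.toFun (n, c)).2.factorial : ℂ))) (besselJ n z * t ^ n)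
    rw [hfun, hv]
    exact ((besselJnat_hasSum M z).mul_right _).mul_left _

lemma kappa_sq (lam k : ℝ) (hk : 0 < k) :
    (kappa lam k) ^ 2 = (k : ℂ) ^ 2 - (lam : ℂ) ^ 2 := by
  unfold kappa
  split_ifs with h
  · have h0 : (0 : ℝ) ≤ k ^ 2 - lam ^ 2 := by
      nlinarith [_root_.sq_abs lam, abs_nonneg lam]
    rw [← Complex.ofReal_pow, Real.sq_sqrt h0]
    push_cast
    ring
  · have h0 : (0 : ℝ) ≤ lam ^ 2 - k ^ 2 := by
      push_neg at h
      nlinarith [_root_.sq_abs lam, abs_nonneg lam]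
    rw [mul_pow, Complex.I_sq, ← Complex.ofReal_pow, Real.sq_sqrt h0]
    push_cast
    ring

lemma omega_mul_conj (lam k : ℝ) (hk : 0 < k) :
    omega lam k * ((kappa lam k - Complex.I * (lam : ℂ)) / (k : ℂ)) = 1 := by
  have hkc : (k : ℂ) ≠ 0 := Complex.ofReal_ne_zero.mpr hk.ne'
  unfold omega
  field_simp
  linear_combination kappa_sq lam k hk - (lam : ℂ) ^ 2 * Complex.I_sq

lemma omega_ne_zero (lam k : ℝ) (hk : 0 < k) : omega lam k ≠ 0 :=
  left_ne_zero_of_mul_eq_one (omega_mul_conj lam k hk)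

lemma omega_inv (lam k : ℝ) (hk : 0 < k) :
    (omega lam k)⁻¹ = (kappa lam k - Complex.I * (lam : ℂ)) / (k : ℂ) :=
  inv_eq_of_mul_eq_one_right (omega_mul_conj lam k hk)

lemma exparg (k lam ρ θ : ℝ) (hk : 0 < k) :
    ((k * ρ : ℝ) : ℂ) / 2 * ((omega lam k * Complex.exp ((θ : ℂ) * Complex.I))
        - (omega lam k * Complex.exp ((θ : ℂ) * Complex.I))⁻¹)
      = Complex.I * (lam : ℂ) * ((ρ * Real.cos θ : ℝ) : ℂ)
          + Complex.I * kappa lam k * ((ρ * Real.sin θ : ℝ) : ℂ) := by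
  have hkc : (k : ℂ) ≠ 0 := Complex.ofReal_ne_zero.mpr hk.ne'
  rw [mul_inv, omega_inv lam k hk, ← Complex.exp_neg, ← neg_mul,
    mul_comm ((kappa lam k - Complex.I * (lam : ℂ)) / (k : ℂ)), Complex.exp_mul_I,
    Complex.exp_mul_I, Complex.cos_neg, Complex.sin_neg]
  push_cast
  unfold omega
  field_simp
  ring_nf

lemma hasSum_JA (k lam ρ θ x y : ℝ) (hk : 0 < k)
    (hx : x = ρ * Real.cos θ) (hy : y = ρ * Real.sin θ) :
    HasSum (fun n : ℤ => besselJ n ((k * ρ : ℝ) : ℂ)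
        * Complex.exp (Complex.I * (n : ℂ) * (θ : ℂ)) * (omega lam k) ^ n)
      (Complex.exp (Complex.I * (lam : ℂ) * (x : ℂ) + Complex.I * kappa lam k * (y : ℂ))) := by
  have ht : omega lam k * Complex.exp ((θ : ℂ) * Complex.I) ≠ 0 :=
    mul_ne_zero (omega_ne_zero lam k hk) (Complex.exp_ne_zero _)
  have h := genfun ((k * ρ : ℝ) : ℂ) _ ht
  rw [exparg k lam ρ θ hk] at h
  rw [hx, hy]
  convert h using 2 with n
  rw [mul_zpow, ← Complex.exp_int_mul]
  rw [show ((n : ℂ) * ((θ : ℂ) * Complex.I)) = Complex.I * (n : ℂ) * (θ : ℂ) by ring]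
  ring

lemma hasSum_JA_neg (k lam ρ θ x y : ℝ) (hk : 0 < k)
    (hx : x = ρ * Real.cos θ) (hy : y = ρ * Real.sin θ) :
    HasSum (fun m : ℤ => (-1 : ℂ) ^ m * besselJ m ((k * ρ : ℝ) : ℂ)
        * Complex.exp (Complex.I * (m : ℂ) * (θ : ℂ)) * (omega lam k) ^ m)
      (Complex.exp (-(Complex.I * (lam : ℂ) * (x : ℂ) + Complex.I * kappa lam k * (y : ℂ)))) := by
  have ht : omega lam k * Complex.exp ((θ : ℂ) * Complex.I) ≠ 0 :=
    mul_ne_zero (omega_ne_zero lam k hk) (Complex.exp_ne_zero _)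
  have htn : -(omega lam k * Complex.exp ((θ : ℂ) * Complex.I)) ≠ 0 := neg_ne_zero.mpr ht
  have h := genfun ((k * ρ : ℝ) : ℂ) _ htn
  have harg : ((k * ρ : ℝ) : ℂ) / 2 * (-(omega lam k * Complex.exp ((θ : ℂ) * Complex.I))
        - (-(omega lam k * Complex.exp ((θ : ℂ) * Complex.I)))⁻¹)
      = -(((k * ρ : ℝ) : ℂ) / 2 * ((omega lam k * Complex.exp ((θ : ℂ) * Complex.I))
        - (omega lam k * Complex.exp ((θ : ℂ) * Complex.I))⁻¹)) := by
    rw [inv_neg]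
    ring
  rw [harg, exparg k lam ρ θ hk] at h
  rw [hx, hy]
  convert h using 2 with m
  rw [show -(omega lam k * Complex.exp ((θ : ℂ) * Complex.I))
      = (-1 : ℂ) * (omega lam k * Complex.exp ((θ : ℂ) * Complex.I)) by ring,
    mul_zpow, mul_zpow, ← Complex.exp_int_mul]
  rw [show ((m : ℂ) * ((θ : ℂ) * Complex.I)) = Complex.I * (m : ℂ) * (θ : ℂ) by ring]
  ring

noncomputable def coefJ (k ρ θ : ℝ) (n : ℤ) : ℂ :=
  besselJ n ((k * ρ : ℝ) : ℂ) * Complex.exp (Complex.I * (n : ℂ) * (θ : ℂ))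

lemma norm_exp_I_int (n : ℤ) (θ : ℝ) :
    ‖Complex.exp (Complex.I * (n : ℂ) * (θ : ℂ))‖ = 1 := by
  rw [show Complex.I * (n : ℂ) * (θ : ℂ) = (((n : ℝ) * θ : ℝ) : ℂ) * Complex.I by
    push_cast; ring]
  rw [Complex.norm_exp_ofReal_mul_I]

lemma coefJ_norm (k ρ θ : ℝ) (n : ℤ) :
    ‖coefJ k ρ θ n‖ = ‖besselJ n ((k * ρ : ℝ) : ℂ)‖ := by
  rw [coefJ, norm_mul, norm_exp_I_int, mul_one]

lemma coefJ_norm_neg (k ρ θ : ℝ) (n : ℤ) :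
    ‖(-1 : ℂ) ^ n * coefJ k ρ θ n‖ = ‖besselJ n ((k * ρ : ℝ) : ℂ)‖ := by
  rw [norm_mul, norm_zpow, norm_neg, norm_one, one_zpow, one_mul, coefJ_norm]

lemma hasSum_coefJ (k lam ρ θ x y : ℝ) (hk : 0 < k)
    (hx : x = ρ * Real.cos θ) (hy : y = ρ * Real.sin θ) :
    HasSum (fun n : ℤ => coefJ k ρ θ n * (omega lam k) ^ n)
      (Complex.exp (Complex.I * (lam : ℂ) * (x : ℂ) + Complex.I * kappa lam k * (y : ℂ))) := by
  simpa [coefJ] using hasSum_JA k lam ρ θ x y hk hx hy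

lemma hasSum_coefJ_neg (k lam ρ θ x y : ℝ) (hk : 0 < k)
    (hx : x = ρ * Real.cos θ) (hy : y = ρ * Real.sin θ) :
    HasSum (fun m : ℤ => ((-1 : ℂ) ^ m * coefJ k ρ θ m) * (omega lam k) ^ m)
      (Complex.exp (-(Complex.I * (lam : ℂ) * (x : ℂ)
        + Complex.I * kappa lam k * (y : ℂ)))) := by
  simpa [coefJ, mul_assoc] using hasSum_JA_neg k lam ρ θ x y hk hx hy

/-- multipole-to-local (M2L) translation. With multipole coefficients
α_n = Σ_j Q_j′ J_n(k′ρ_j′) e^{inθ_j′} and translated local coefficients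
β_m = (−1)^m Σ_{n∈ℤ} 𝓘^{k′k}_{nm}(x_c′−x_c, y_c′, y_c, σ) α_n, under the stated hypotheses
the potential Φ⁺(r_i, σ) = Σ_j Q_j′ 𝓘^{k′k}_{00}(x_j′−x_i, y_j′, y_i, σ) equals the
absolutely convergent local expansion Σ_{m∈ℤ} β_m J_m(kρ_i) e^{imθ_i}. -/
theorem multipole_to_local_translation
    (k k' : ℝ) (hk : 0 < k) (hk' : 0 < k') (σ : ℝ → ℂ) (hσ : Measurable σ)
    (Ms : ℕ) (Q : Fin Ms → ℂ) (x' y' ρ' θ' : Fin Ms → ℝ)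
    (xc' yc' xc yc xi yi ρi θi : ℝ)
    (hρ' : ∀ j, 0 ≤ ρ' j)
    (hx' : ∀ j, x' j - xc' = ρ' j * Real.cos (θ' j))
    (hy' : ∀ j, y' j - yc' = ρ' j * Real.sin (θ' j))
    (hρi : 0 ≤ ρi)
    (hxi : xi - xc = ρi * Real.cos θi)
    (hyi : yi - yc = ρi * Real.sin θi)
    (hint : ∀ n m : ℤ, MeasureTheory.Integrable
      (sommerfeldIntegrand k' k n m (xc' - xc) yc' yc σ))
    (hsum : ∀ j, Summable (fun p : ℤ × ℤ =>
      ‖besselJ p.1 ((k' * ρ' j : ℝ) : ℂ)‖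
        * ‖besselJ p.2 ((k * ρi : ℝ) : ℂ)‖
        * ∫ lam : ℝ, ‖sommerfeldIntegrand k' k p.1 p.2 (xc' - xc) yc' yc σ lam‖)) :
    Summable (fun m : ℤ =>
      ‖((-1 : ℂ) ^ m * ∑' n : ℤ, sommerfeld k' k n m (xc' - xc) yc' yc σ
          * (∑ j, Q j * besselJ n ((k' * ρ' j : ℝ) : ℂ)
              * Complex.exp (Complex.I * (n : ℂ) * (θ' j : ℂ))))
        * besselJ m ((k * ρi : ℝ) : ℂ) * Complex.exp (Complex.I * (m : ℂ) * (θi : ℂ))‖) ∧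
    (∑ j, Q j * sommerfeld k' k 0 0 (x' j - xi) (y' j) yi σ)
      = ∑' m : ℤ, ((-1 : ℂ) ^ m * ∑' n : ℤ, sommerfeld k' k n m (xc' - xc) yc' yc σ
          * (∑ j, Q j * besselJ n ((k' * ρ' j : ℝ) : ℂ)
              * Complex.exp (Complex.I * (n : ℂ) * (θ' j : ℂ))))
        * besselJ m ((k * ρi : ℝ) : ℂ)
        * Complex.exp (Complex.I * (m : ℂ) * (θi : ℂ)) := by
  classical
  -- abbreviations
  set J' : Fin Ms → ℤ → ℂ := fun j n => coefJ k' (ρ' j) (θ' j) n with hJ'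
  set D : ℤ → ℂ := fun m => (-1 : ℂ) ^ m * coefJ k ρi θi m with hD
  set Ip : ℤ × ℤ → ℂ := fun p => sommerfeld k' k p.1 p.2 (xc' - xc) yc' yc σ with hIp
  set G : Fin Ms → ℤ × ℤ → ℂ := fun j p => J' j p.1 * D p.2 * Ip p with hG
  set A : ℤ → ℂ := fun n => ∑ j, Q j * J' j n with hA
  set T : ℤ × ℤ → ℂ := fun p => D p.2 * (Ip p * A p.1) with hT
  -- hsum rephrased with norms
  have hsum' : ∀ j, Summable (fun p : ℤ × ℤ =>
      ‖J' j p.1‖ * ‖D p.2‖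
        * ∫ lam : ℝ, ‖sommerfeldIntegrand k' k p.1 p.2 (xc' - xc) yc' yc σ lam‖) := by
    intro j
    refine (hsum j).congr fun p => ?_
    simp only [hJ', hD]
    rw [coefJ_norm, coefJ_norm_neg]
  -- pointwise Jacobi-Anger expansion of the kernel
  have hpt : ∀ (j : Fin Ms) (lam : ℝ),
      HasSum (fun p : ℤ × ℤ =>
        J' j p.1 * D p.2 * sommerfeldIntegrand k' k p.1 p.2 (xc' - xc) yc' yc σ lam)
        (pwKernel k' k lam (x' j - xi) (y' j) yi * σ lam) := by
    intro j lam
    have h1 := hasSum_coefJ k' lam (ρ' j) (θ' j) (x' j - xc') (y' j - yc') hk' (hx' j) (hy' j)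
    have h2 := hasSum_coefJ_neg k lam ρi θi (xi - xc) (yi - yc) hk hxi hyi
    have hn1 : Summable fun n : ℤ => ‖coefJ k' (ρ' j) (θ' j) n * (omega lam k') ^ n‖ :=
      summable_norm_iff.mpr h1.summable
    have hn2 : Summable fun m : ℤ => ‖((-1 : ℂ) ^ m * coefJ k ρi θi m) * (omega lam k) ^ m‖ :=
      summable_norm_iff.mpr h2.summable
    have hmn := Summable.mul_norm hn1 hn2
    have hsm : Summable (fun p : ℤ × ℤ =>
        (coefJ k' (ρ' j) (θ' j) p.1 * (omega lam k') ^ p.1)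
          * (((-1 : ℂ) ^ p.2 * coefJ k ρi θi p.2) * (omega lam k) ^ p.2)) :=
      summable_norm_iff.mp hmn
    have hm := h1.mul h2 hsm
    have hB := hm.mul_left (pwKernel k' k lam (xc' - xc) yc' yc * σ lam)
    have hker : pwKernel k' k lam (x' j - xi) (y' j) yi
        = pwKernel k' k lam (xc' - xc) yc' yc
          * (Complex.exp (Complex.I * (lam : ℂ) * ((x' j - xc' : ℝ) : ℂ)
              + Complex.I * kappa lam k' * ((y' j - yc' : ℝ) : ℂ))
            * Complex.exp (-(Complex.I * (lam : ℂ) * ((xi - xc : ℝ) : ℂ)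
              + Complex.I * kappa lam k * ((yi - yc : ℝ) : ℂ)))) := by
      unfold pwKernel
      rw [← Complex.exp_add, ← Complex.exp_add]
      congr 1
      push_cast
      ring
    have hfeq : (fun p : ℤ × ℤ =>
        J' j p.1 * D p.2 * sommerfeldIntegrand k' k p.1 p.2 (xc' - xc) yc' yc σ lam)
        = fun p : ℤ × ℤ => (pwKernel k' k lam (xc' - xc) yc' yc * σ lam)
            * ((coefJ k' (ρ' j) (θ' j) p.1 * (omega lam k') ^ p.1)
              * (((-1 : ℂ) ^ p.2 * coefJ k ρi θi p.2) * (omega lam k) ^ p.2)) := by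
      funext p
      simp only [hJ', hD, sommerfeldIntegrand]
      ring
    have hveq : pwKernel k' k lam (x' j - xi) (y' j) yi * σ lam
        = (pwKernel k' k lam (xc' - xc) yc' yc * σ lam)
          * (Complex.exp (Complex.I * (lam : ℂ) * ((x' j - xc' : ℝ) : ℂ)
              + Complex.I * kappa lam k' * ((y' j - yc' : ℝ) : ℂ))
            * Complex.exp (-(Complex.I * (lam : ℂ) * ((xi - xc : ℝ) : ℂ)
              + Complex.I * kappa lam k * ((yi - yc : ℝ) : ℂ)))) := by
      rw [hker]; ring
    rw [hfeq, hveq]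
    exact hB
  -- integrability of each term
  have hFint : ∀ (j : Fin Ms) (p : ℤ × ℤ), Integrable (fun lam : ℝ =>
      J' j p.1 * D p.2 * sommerfeldIntegrand k' k p.1 p.2 (xc' - xc) yc' yc σ lam) := by
    intro j p
    exact (hint p.1 p.2).const_mul _
  -- summability of the integrals of norms
  have hFnorm : ∀ j : Fin Ms, Summable (fun p : ℤ × ℤ =>
      ∫ lam : ℝ, ‖J' j p.1 * D p.2
        * sommerfeldIntegrand k' k p.1 p.2 (xc' - xc) yc' yc σ lam‖) := by
    intro j
    refine (hsum' j).congr fun p => ?_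
    have : ∀ lam : ℝ, ‖J' j p.1 * D p.2
        * sommerfeldIntegrand k' k p.1 p.2 (xc' - xc) yc' yc σ lam‖
        = (‖J' j p.1‖ * ‖D p.2‖)
          * ‖sommerfeldIntegrand k' k p.1 p.2 (xc' - xc) yc' yc σ lam‖ := by
      intro lam; rw [norm_mul, norm_mul]
    rw [show (fun lam : ℝ => ‖J' j p.1 * D p.2
        * sommerfeldIntegrand k' k p.1 p.2 (xc' - xc) yc' yc σ lam‖)
      = fun lam : ℝ => (‖J' j p.1‖ * ‖D p.2‖)
          * ‖sommerfeldIntegrand k' k p.1 p.2 (xc' - xc) yc' yc σ lam‖ from funext this]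
    rw [MeasureTheory.integral_const_mul]
  -- expansion of each source potential
  have hjexp : ∀ j : Fin Ms, sommerfeld k' k 0 0 (x' j - xi) (y' j) yi σ
      = ∑' p : ℤ × ℤ, G j p := by
    intro j
    have h00 : ∀ lam : ℝ, sommerfeldIntegrand k' k 0 0 (x' j - xi) (y' j) yi σ lam
        = pwKernel k' k lam (x' j - xi) (y' j) yi * σ lam := by
      intro lam
      simp [sommerfeldIntegrand]
    have key := integral_tsum_of_summable_integral_norm (fun p => hFint j p) (hFnorm j)
    calc sommerfeld k' k 0 0 (x' j - xi) (y' j) yi σ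
        = ∫ lam : ℝ, ∑' p : ℤ × ℤ,
            J' j p.1 * D p.2 * sommerfeldIntegrand k' k p.1 p.2 (xc' - xc) yc' yc σ lam := by
          unfold sommerfeld
          congr 1
          funext lam
          rw [h00 lam, ← (hpt j lam).tsum_eq]
      _ = ∑' p : ℤ × ℤ, ∫ lam : ℝ,
            J' j p.1 * D p.2 * sommerfeldIntegrand k' k p.1 p.2 (xc' - xc) yc' yc σ lam :=
          key.symm
      _ = ∑' p : ℤ × ℤ, G j p := by
          refine tsum_congr fun p => ?_
          rw [MeasureTheory.integral_const_mul]
          rfl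
  -- summability of G
  have hGs : ∀ j : Fin Ms, Summable (G j) := by
    intro j
    refine Summable.of_norm_bounded (hsum' j) fun p => ?_
    rw [hG]
    simp only
    rw [norm_mul, norm_mul]
    gcongr
    exact norm_integral_le_integral_norm _
  -- sum over j equals T
  have hTeq : ∀ p : ℤ × ℤ, (∑ j, Q j * G j p) = T p := by
    intro p
    simp only [hT, hG, hA, Finset.mul_sum]
    refine Finset.sum_congr rfl fun j _ => by ring
  have hTs : Summable T := by
    refine Summable.congr ?_ hTeq
    exact summable_sum fun j _ => (hGs j).mul_left (Q j)
  have hTsw : Summable (fun q : ℤ × ℤ => T (q.2, q.1)) :=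
    (Equiv.prodComm ℤ ℤ).summable_iff.mpr hTs
  have hTnorm : Summable (fun q : ℤ × ℤ => ‖T (q.2, q.1)‖) :=
    summable_norm_iff.mpr hTsw
  -- inner identity
  have hAeq : ∀ n : ℤ, (∑ j, Q j * besselJ n ((k' * ρ' j : ℝ) : ℂ)
      * Complex.exp (Complex.I * (n : ℂ) * (θ' j : ℂ))) = A n := by
    intro n
    refine Finset.sum_congr rfl fun j _ => ?_
    simp only [hA, hJ', coefJ]
    ring
  have hinner : ∀ m : ℤ, ((-1 : ℂ) ^ m * ∑' n : ℤ, sommerfeld k' k n m (xc' - xc) yc' yc σ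
        * (∑ j, Q j * besselJ n ((k' * ρ' j : ℝ) : ℂ)
            * Complex.exp (Complex.I * (n : ℂ) * (θ' j : ℂ))))
      * besselJ m ((k * ρi : ℝ) : ℂ) * Complex.exp (Complex.I * (m : ℂ) * (θi : ℂ))
      = ∑' n : ℤ, T (n, m) := by
    intro m
    have h1 : (∑' n : ℤ, sommerfeld k' k n m (xc' - xc) yc' yc σ
        * (∑ j, Q j * besselJ n ((k' * ρ' j : ℝ) : ℂ)
            * Complex.exp (Complex.I * (n : ℂ) * (θ' j : ℂ))))
        = ∑' n : ℤ, Ip (n, m) * A n := by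
      refine tsum_congr fun n => ?_
      rw [hAeq n]
    rw [h1]
    rw [show (fun n : ℤ => T (n, m)) = fun n : ℤ => D m * (Ip (n, m) * A n) from rfl]
    rw [tsum_mul_left]
    simp only [hD, coefJ]
    ring
  constructor
  · -- summability of the norms
    have hgsum : Summable (fun m : ℤ => ∑' n : ℤ, ‖T (n, m)‖) :=
      ⟨_, HasSum.prod_fiberwise hTnorm.hasSum fun m => (hTnorm.prod_factor m).hasSum⟩
    refine Summable.of_nonneg_of_le (fun m => norm_nonneg _) (fun m => ?_) hgsum
    rw [hinner m]
    exact norm_tsum_le_tsum_norm (summable_norm_iff.mpr (hTsw.prod_factor m))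
  · -- the main identity
    calc (∑ j, Q j * sommerfeld k' k 0 0 (x' j - xi) (y' j) yi σ)
        = ∑ j, Q j * ∑' p : ℤ × ℤ, G j p := by
          refine Finset.sum_congr rfl fun j _ => by rw [hjexp j]
      _ = ∑ j, ∑' p : ℤ × ℤ, Q j * G j p := by
          refine Finset.sum_congr rfl fun j _ => (tsum_mul_left).symm
      _ = ∑' p : ℤ × ℤ, ∑ j, Q j * G j p :=
          (Summable.tsum_finsetSum fun j _ => (hGs j).mul_left (Q j)).symm
      _ = ∑' p : ℤ × ℤ, T p := tsum_congr hTeq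
      _ = ∑' q : ℤ × ℤ, T (q.2, q.1) := ((Equiv.prodComm ℤ ℤ).tsum_eq T).symm
      _ = ∑' m : ℤ, ∑' n : ℤ, T (n, m) :=
          Summable.tsum_prod' hTsw fun m => hTsw.prod_factor m
      _ = _ := tsum_congr fun m => (hinner m).symm
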